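/- arXiv:1209.3163 — 3 statements merged into one kernel-verified Lean document; each statement's English description precedes it below -/
import Mathlib

section
/- Two Boolean structure functions on n components have the same diagonal reliability polynomial h(x,...,x) if and only if they have the same tail signature (S̄_0,...,S̄_n), where S̄_k = (1/C(n,n-k)) ∑_{|A|=n-k} φ(A). -/
/-!
Grouping the sets `A` by cardinality writes the diagonal section as
`∑ j, s j * x ^ j * (1 - x) ^ (n - j)`, where `s j` is the sum of `φ` over the `j`-element sets,
so that `s j = C(n, j) * S̄_(n-j)`. The polynomials `X ^ j * (1 - X) ^ (n - j)`, `j ≤ n`, are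
linearly independent, so the diagonal section determines the `s j`, i.e. the tail signature,
and conversely.
-/

open Finset Polynomial

def layerSum {α M : Type*} [Fintype α] [AddCommMonoid M] (φ : Finset α → M) (j : ℕ) : M :=
  ∑ A ∈ univ.filter (fun A : Finset α => A.card = j), φ A

theorem sum_mul_eq_sum_range_layerSum_mul {α R : Type*} [Fintype α] [NonUnitalNonAssocSemiring R]
    (φ : Finset α → R) (f : ℕ → R) :
    ∑ A, φ A * f A.card = ∑ j ∈ range (Fintype.card α + 1), layerSum φ j * f j := by
  rw [← sum_fiberwise_of_maps_to (g := card) fun A _ =>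
    mem_range_succ_iff.mpr (card_le_univ A)]
  refine sum_congr rfl fun j _ => ?_
  rw [layerSum, sum_mul]
  exact sum_congr rfl fun A hA => by rw [(mem_filter.mp hA).2]

theorem eq_zero_of_sum_C_mul_X_pow_mul_one_sub_X_pow_eq_zero {R : Type*} [CommRing R] :
    ∀ (n : ℕ) (c : ℕ → R),
      ∑ j ∈ range (n + 1), C (c j) * X ^ j * (1 - X) ^ (n - j) = 0 → ∀ j ≤ n, c j = 0
  | 0, c, h, j, hj => by
    simpa [Nat.le_zero.mp hj] using h
  | n + 1, c, h, j, hj => by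
    -- Evaluating at `0` isolates `c 0`; what is left is `X` times the same kind of sum of degree `n`.
    rw [sum_range_succ'] at h
    have hc₀ : c 0 = 0 := by simpa [eval_finsetSum] using congrArg (eval 0) h
    have htail : ∑ j ∈ range (n + 1), C (c (j + 1)) * X ^ j * (1 - X) ^ (n - j) = 0 := by
      refine isRegular_X.left (?_ : X * _ = X * 0)
      rw [mul_zero, mul_sum, ← h, hc₀, C_0, zero_mul, zero_mul, add_zero]
      refine sum_congr rfl fun i _ => ?_
      rw [Nat.add_sub_add_right]
      ring
    rcases j with _ | j
    · exact hc₀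
    · exact eq_zero_of_sum_C_mul_X_pow_mul_one_sub_X_pow_eq_zero n (fun j => c (j + 1)) htail j
        (Nat.succ_le_succ_iff.mp hj)

theorem eq_of_forall_sum_mul_pow_mul_one_sub_pow_eq {R : Type*} [CommRing R] [IsDomain R]
    [Infinite R] {n : ℕ} {c d : ℕ → R}
    (h : ∀ x : R, ∑ j ∈ range (n + 1), c j * x ^ j * (1 - x) ^ (n - j) =
      ∑ j ∈ range (n + 1), d j * x ^ j * (1 - x) ^ (n - j)) :
    ∀ j ≤ n, c j = d j := by
  have hpoly : ∑ j ∈ range (n + 1), C (c j - d j) * X ^ j * (1 - X) ^ (n - j) = 0 := by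
    refine Polynomial.funext fun x => ?_
    simp only [eval_finsetSum, eval_mul, eval_C, eval_pow, eval_sub, eval_one, eval_X, eval_zero,
      sub_mul, sum_sub_distrib, h, sub_self]
  intro j hj
  exact sub_eq_zero.mp (eq_zero_of_sum_C_mul_X_pow_mul_one_sub_X_pow_eq_zero n _ hpoly j hj)

theorem stmt_5_general (n : ℕ) (φ₁ φ₂ : Finset (Fin n) → ℝ) :
    (∀ x : ℝ,
        (∑ A : Finset (Fin n), φ₁ A * x ^ A.card * (1 - x) ^ (n - A.card)) =
          ∑ A : Finset (Fin n), φ₂ A * x ^ A.card * (1 - x) ^ (n - A.card)) ↔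
      (∀ k ∈ Finset.range (n + 1),
        (∑ A ∈ Finset.univ.filter (fun A : Finset (Fin n) => A.card = n - k), φ₁ A)
            / (n.choose (n - k) : ℝ) =
          (∑ A ∈ Finset.univ.filter (fun A : Finset (Fin n) => A.card = n - k), φ₂ A)
            / (n.choose (n - k) : ℝ)) := by
  have hdiag : ∀ (φ : Finset (Fin n) → ℝ) (x : ℝ),
      ∑ A, φ A * x ^ A.card * (1 - x) ^ (n - A.card) =
        ∑ j ∈ range (n + 1), layerSum φ j * x ^ j * (1 - x) ^ (n - j) := fun φ x => by
    simpa only [mul_assoc, Fintype.card_fin] using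
      sum_mul_eq_sum_range_layerSum_mul φ fun j => x ^ j * (1 - x) ^ (n - j)
  simp only [hdiag]
  constructor
  · intro h k _
    exact congrArg (· / _) (eq_of_forall_sum_mul_pow_mul_one_sub_pow_eq h (n - k) (n.sub_le k))
  · intro h x
    refine sum_congr rfl fun j hj => ?_
    have hjn : j ≤ n := mem_range_succ_iff.mp hj
    have hsig := h (n - j) (mem_range_succ_iff.mpr (n.sub_le j))
    rw [Nat.sub_sub_self hjn] at hsig
    have hchoose : (n.choose j : ℝ) ≠ 0 := Nat.cast_ne_zero.mpr (Nat.choose_pos hjn).ne'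
    have hlayer : layerSum φ₁ j = layerSum φ₂ j := (div_left_inj' hchoose).mp hsig
    rw [hlayer]

/-- two Boolean structure functions have the same diagonal
reliability polynomial iff they have the same tail signature. -/
theorem stmt_5 (n : ℕ) (φ₁ φ₂ : Finset (Fin n) → ℝ)
    (hbool₁ : ∀ A, φ₁ A = 0 ∨ φ₁ A = 1) (hbool₂ : ∀ A, φ₂ A = 0 ∨ φ₂ A = 1) :
    (∀ x : ℝ,
        (∑ A : Finset (Fin n), φ₁ A * x ^ A.card * (1 - x) ^ (n - A.card)) =
          ∑ A : Finset (Fin n), φ₂ A * x ^ A.card * (1 - x) ^ (n - A.card)) ↔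
      (∀ k ∈ Finset.range (n + 1),
        (∑ A ∈ Finset.univ.filter (fun A : Finset (Fin n) => A.card = n - k), φ₁ A)
            / (n.choose (n - k) : ℝ) =
          (∑ A ∈ Finset.univ.filter (fun A : Finset (Fin n) => A.card = n - k), φ₂ A)
            / (n.choose (n - k) : ℝ)) :=
  stmt_5_general n φ₁ φ₂
end

section
/- For a recurrent system with r identical parallel-pair modules (h_χ^R(x) = 2x - 1, n = 2r): if h_ψ^R(x) = ∑_{k=0}^r C(r,k) S̄_{ψ,k} (x-1)^k, then h_φ^R(x+1) = ∑_{k=0}^r C(r,k) S̄_{ψ,k} x^{2k} (2x+1)^{r-k}, and hence the tail signature of the whole system satisfies S̄_ℓ = ∑_{k=max(ℓ-r,0)}^{⌊ℓ/2⌋} [C(r,k) C(r-k, ℓ-2k) / C(2r,ℓ)] · 2^{ℓ-2k} · S̄_{ψ,k} for 0 ≤ ℓ ≤ 2r. -/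
/-! Put x = t + 1. By the composition rule, x^{2r} h_ψ((2x-1)/x²) is (2x-1)^r times the reflected
form of h_ψ at x²/(2x-1), whose shifted argument x²/(2x-1) - 1 is t²/(2t+1); clearing denominators
gives the expansion at every t ∉ {-1, -1/2}, hence as polynomials. The k-th summand
t^{2k}(2t+1)^{r-k} contributes to the coefficient of t^ℓ exactly when 2k ≤ ℓ ≤ k + r. -/

open Finset Polynomial

theorem Polynomial.coeff_C_mul_X_add_one_pow {R : Type*} [CommSemiring R] (a : R) (n j : ℕ) :
    ((C a * X + 1) ^ n).coeff j = n.choose j * a ^ j := by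
  have h : (C a * X + 1) ^ n = ((X + 1) ^ n).comp (C a * X) := by
    simp only [pow_comp, add_comp, X_comp, one_comp]
  rw [h, comp_C_mul_X_coeff, coeff_X_add_one_pow]

theorem Polynomial.coeff_X_pow_mul_two_mul_X_add_one_pow {R : Type*} [CommSemiring R]
    (m n ℓ : ℕ) :
    (X ^ m * (2 * X + 1 : R[X]) ^ n).coeff ℓ =
      if m ≤ ℓ ∧ ℓ ≤ m + n then (n.choose (ℓ - m) : R) * 2 ^ (ℓ - m) else 0 := by
  rw [coeff_X_pow_mul', ← C_ofNat, coeff_C_mul_X_add_one_pow]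
  by_cases hm : m ≤ ℓ
  · by_cases hn : ℓ ≤ m + n
    · rw [if_pos hm, if_pos ⟨hm, hn⟩]
    · rw [if_pos hm, if_neg (by omega), Nat.choose_eq_zero_of_lt (by omega), Nat.cast_zero,
        zero_mul]
  · rw [if_neg hm, if_neg (by omega)]

theorem Polynomial.coeff_sum_C_mul_X_pow_mul_two_mul_X_add_one_pow {R : Type*} [CommSemiring R]
    (c : ℕ → R) (r ℓ : ℕ) :
    (∑ k ∈ range (r + 1), C (c k) * X ^ (2 * k) * (2 * X + 1) ^ (r - k)).coeff ℓ =
      ∑ k ∈ Icc (ℓ - r) (ℓ / 2), c k * ((r - k).choose (ℓ - 2 * k) : R) * 2 ^ (ℓ - 2 * k) := by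
  have hsupport : (range (r + 1)).filter (fun k => 2 * k ≤ ℓ ∧ ℓ ≤ 2 * k + (r - k)) =
      Icc (ℓ - r) (ℓ / 2) := by
    ext k
    simp only [mem_filter, mem_range, mem_Icc]
    omega
  simp only [finsetSum_coeff, mul_assoc, coeff_C_mul, coeff_X_pow_mul_two_mul_X_add_one_pow,
    mul_ite, mul_zero]
  rw [← sum_filter, hsupport]

theorem pow_mul_sum_mul_div_pow {K : Type*} [Field K] (c : ℕ → K) {u : K} (hu : u ≠ 0)
    (w : K) (n : ℕ) :
    u ^ n * ∑ k ∈ range (n + 1), c k * (w / u) ^ k =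
      ∑ k ∈ range (n + 1), c k * w ^ k * u ^ (n - k) := by
  rw [mul_sum]
  refine sum_congr rfl fun k hk => ?_
  rw [← Nat.sub_add_cancel (Nat.lt_succ_iff.mp (mem_range.mp hk)), pow_add, div_pow,
    Nat.add_sub_cancel]
  field_simp

theorem pow_mul_apply_div_of_reflection {K : Type*} [Field K] {f g : K → K} {n : ℕ}
    (hfg : ∀ y : K, y ≠ 0 → y ^ n * f (1 / y) = g y) {a b : K} (ha : a ≠ 0) (hb : b ≠ 0) :
    b ^ n * f (a / b) = a ^ n * g (b / a) := by
  rw [← hfg _ (div_ne_zero hb ha), one_div_div, ← mul_assoc, ← mul_pow, mul_div_cancel₀ _ ha]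

/-- recurrent system made of r identical parallel pairs
(h_χ^R(x) = 2x - 1, n = 2r): expansion of h_φ^R(x+1) and the resulting
tail-signature formula. -/
theorem stmt_18 (r : ℕ) (Sψ : ℕ → ℝ)
    -- the diagonal reliability function of the organizing structure ψ
    (hψ : ℝ → ℝ)
    -- its r-reflection is the Bernstein/Taylor form with coefficients C(r,k) S̄_{ψ,k}
    (hψR : ∀ y : ℝ, y ≠ 0 →
      y ^ r * hψ (1 / y) = ∑ k ∈ Finset.range (r + 1),
        (r.choose k : ℝ) * Sψ k * (y - 1) ^ k)
    -- the 2r-reflected diagonal reliability polynomial of the whole system: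
    -- h_φ^R(x) = x^{2r} h_ψ(x^{-2} h_χ^R(x)) with h_χ^R(x) = 2x - 1
    (p : Polynomial ℝ)
    (hp : ∀ x : ℝ, x ≠ 0 → p.eval x = x ^ (2 * r) * hψ ((2 * x - 1) / x ^ 2)) :
    (p.comp (X + 1) = ∑ k ∈ Finset.range (r + 1),
        Polynomial.C ((r.choose k : ℝ) * Sψ k) * X ^ (2 * k) * (2 * X + 1) ^ (r - k)) ∧
      ∀ ℓ ≤ 2 * r,
        (p.comp (X + 1)).coeff ℓ / ((2 * r).choose ℓ : ℝ) =
          ∑ k ∈ Finset.Icc (ℓ - r) (ℓ / 2),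
            ((r.choose k : ℝ) * ((r - k).choose (ℓ - 2 * k) : ℝ) /
                ((2 * r).choose ℓ : ℝ)) * 2 ^ (ℓ - 2 * k) * Sψ k := by
  have hcomp : p.comp (X + 1) = ∑ k ∈ range (r + 1),
      C ((r.choose k : ℝ) * Sψ k) * X ^ (2 * k) * (2 * X + 1) ^ (r - k) := by
    refine eq_of_infinite_eval_eq _ _ <|
      (Set.toFinite {-1, -(1 / 2)}).infinite_compl.mono fun t ht => ?_
    simp only [Set.mem_compl_iff, Set.mem_insert_iff, Set.mem_singleton_iff, not_or] at ht
    have hx : t + 1 ≠ 0 := fun h => ht.1 (by linarith)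
    have hu : 2 * (t + 1) - 1 ≠ 0 := fun h => ht.2 (by linarith)
    have hshift : (t + 1) ^ 2 / (2 * (t + 1) - 1) - 1 = t ^ 2 / (2 * (t + 1) - 1) := by
      rw [div_sub_one hu]
      ring
    simp only [Set.mem_ofPred_eq, eval_comp, eval_add, eval_X, eval_one, eval_finsetSum,
      eval_mul, eval_pow, eval_C, eval_ofNat]
    rw [hp _ hx, pow_mul, pow_mul_apply_div_of_reflection hψR hu (pow_ne_zero 2 hx), hshift,
      pow_mul_sum_mul_div_pow _ hu]
    refine sum_congr rfl fun k _ => ?_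
    ring
  refine ⟨hcomp, fun ℓ _ => ?_⟩
  rw [hcomp, coeff_sum_C_mul_X_pow_mul_two_mul_X_add_one_pow, sum_div]
  refine sum_congr rfl fun k _ => ?_
  ring
end

section
/- The structures φ₁(x) = x₁x₂ ⨿ x₂x₃x₄ ⨿ x₅x₆x₇x₈ and φ₂(x) = x₁x₃ ⨿ x₂x₄x₅ ⨿ x₁x₂x₆x₇x₈ on 8 components are distinct Boolean functions but have the same diagonal reliability polynomial h(x) = x² + x³ - x⁶ - x⁷ + x⁸, and hence the same signature. -/
open Finset

/-- The coproduct a ⨿ b = a + b - ab. -/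
def cop (a b : ℝ) : ℝ := a + b - a * b

/-- Indicator of a subset. -/
def ind {n : ℕ} (A : Finset (Fin n)) (i : Fin n) : ℝ := if i ∈ A then 1 else 0

/-- φ₁(x) = x₁x₂ ⨿ x₂x₃x₄ ⨿ x₅x₆x₇x₈ (0-based indices). -/
def phi1 (A : Finset (Fin 8)) : ℝ :=
  cop (cop (ind A 0 * ind A 1) (ind A 1 * ind A 2 * ind A 3))
      (ind A 4 * ind A 5 * ind A 6 * ind A 7)

/-- φ₂(x) = x₁x₃ ⨿ x₂x₄x₅ ⨿ x₁x₂x₆x₇x₈ (0-based indices). -/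
def phi2 (A : Finset (Fin 8)) : ℝ :=
  cop (cop (ind A 0 * ind A 2) (ind A 1 * ind A 3 * ind A 4))
      (ind A 0 * ind A 1 * ind A 5 * ind A 6 * ind A 7)

/-- Tail signature of a structure function on 8 components. -/
noncomputable def tail8 (φ : Finset (Fin 8) → ℝ) (k : ℕ) : ℝ :=
  (∑ A ∈ Finset.univ.filter (fun A : Finset (Fin 8) => A.card = 8 - k), φ A)
    / ((8 : ℕ).choose (8 - k) : ℝ)

def P1 (A : Finset (Fin 8)) : Prop :=
  ((0 ∈ A ∧ 1 ∈ A) ∨ ((1 ∈ A ∧ 2 ∈ A) ∧ 3 ∈ A)) ∨ (((4 ∈ A ∧ 5 ∈ A) ∧ 6 ∈ A) ∧ 7 ∈ A)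


/-! Both structures are indicator functions of monotone path predicates. A brute-force count
over the 256 subsets shows that, for every `j`, both have the same number of path sets of size
`j`, namely `0, 0, 1, 7, 20, 30, 24, 8, 1`. The reliability polynomial and the tail signature
depend on a structure only through these layer sums, and the first one expands to
`x² + x³ - x⁶ - x⁷ + x⁸`. The two functions already differ on `{x₁, x₂}`. -/

section Layers

variable {ι R : Type*} [Fintype ι] [CommRing R]

theorem sum_mul_card_eq_sum_range (φ : Finset ι → R) (f : ℕ → R) :
    ∑ A, φ A * f #A = ∑ j ∈ range (Fintype.card ι + 1), (∑ A with #A = j, φ A) * f j := by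
  rw [← sum_fiberwise_of_maps_to (t := range (Fintype.card ι + 1)) (g := card)
    fun A _ ↦ mem_range_succ_iff.mpr A.card_le_univ]
  refine sum_congr rfl fun j _ ↦ ?_
  rw [sum_mul]
  exact sum_congr rfl fun A hA ↦ by rw [(mem_filter.mp hA).2]

theorem reliability_eq_of_sum_card_eq {φ ψ : Finset ι → R}
    (h : ∀ j, ∑ A with #A = j, φ A = ∑ A with #A = j, ψ A) (x : R) :
    ∑ A, φ A * x ^ #A * (1 - x) ^ (Fintype.card ι - #A) =
      ∑ A, ψ A * x ^ #A * (1 - x) ^ (Fintype.card ι - #A) := by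
  simp only [mul_assoc, h,
    sum_mul_card_eq_sum_range _ fun j ↦ x ^ j * (1 - x) ^ (Fintype.card ι - j)]

theorem card_filter_card_eq_of_card_lt (P : Finset ι → Prop) [DecidablePred P] {j : ℕ}
    (hj : Fintype.card ι < j) : #{A : Finset ι | #A = j ∧ P A} = 0 := by
  refine card_eq_zero.mpr (filter_false_of_mem fun A _ ⟨hA, _⟩ ↦ ?_)
  exact absurd A.card_le_univ (by omega)

end Layers

theorem tail8_eq_of_sum_card_eq {φ ψ : Finset (Fin 8) → ℝ}
    (h : ∀ j, ∑ A with #A = j, φ A = ∑ A with #A = j, ψ A) (k : ℕ) :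
    tail8 φ k = tail8 ψ k := by
  rw [tail8, tail8, h]

theorem cop_boole (p q : Prop) [Decidable p] [Decidable q] :
    cop (if p then (1 : ℝ) else 0) (if q then 1 else 0) = if p ∨ q then 1 else 0 := by
  by_cases hp : p <;> by_cases hq : q <;> simp [cop, hp, hq]

abbrev IsPath1 (A : Finset (Fin 8)) : Prop :=
  0 ∈ A ∧ 1 ∈ A ∨ 1 ∈ A ∧ 2 ∈ A ∧ 3 ∈ A ∨ 4 ∈ A ∧ 5 ∈ A ∧ 6 ∈ A ∧ 7 ∈ A

abbrev IsPath2 (A : Finset (Fin 8)) : Prop :=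
  0 ∈ A ∧ 2 ∈ A ∨ 1 ∈ A ∧ 3 ∈ A ∧ 4 ∈ A ∨ 0 ∈ A ∧ 1 ∈ A ∧ 5 ∈ A ∧ 6 ∈ A ∧ 7 ∈ A

theorem phi1_eq_boole (A : Finset (Fin 8)) : phi1 A = if IsPath1 A then 1 else 0 := by
  simp only [phi1, ind, ite_zero_mul_ite_zero, mul_one, cop_boole, and_assoc, or_assoc]

theorem phi2_eq_boole (A : Finset (Fin 8)) : phi2 A = if IsPath2 A then 1 else 0 := by
  simp only [phi2, ind, ite_zero_mul_ite_zero, mul_one, cop_boole, and_assoc, or_assoc]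

theorem card_isPath1 (j : Fin 9) :
    #{A : Finset (Fin 8) | #A = j ∧ IsPath1 A} = ![0, 0, 1, 7, 20, 30, 24, 8, 1] j := by
  revert j; decide

theorem card_isPath2 (j : Fin 9) :
    #{A : Finset (Fin 8) | #A = j ∧ IsPath2 A} = ![0, 0, 1, 7, 20, 30, 24, 8, 1] j := by
  revert j; decide

theorem sum_card_phi1 (j : ℕ) :
    ∑ A with #A = j, phi1 A = #{A : Finset (Fin 8) | #A = j ∧ IsPath1 A} := by
  simp only [phi1_eq_boole, sum_boole, filter_filter]

theorem sum_card_phi2 (j : ℕ) :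
    ∑ A with #A = j, phi2 A = #{A : Finset (Fin 8) | #A = j ∧ IsPath2 A} := by
  simp only [phi2_eq_boole, sum_boole, filter_filter]

theorem sum_card_phi1_eq_phi2 (j : ℕ) :
    ∑ A with #A = j, phi1 A = ∑ A with #A = j, phi2 A := by
  rw [sum_card_phi1, sum_card_phi2]
  obtain hj | hj := lt_or_ge j 9
  · have h := (card_isPath1 ⟨j, hj⟩).trans (card_isPath2 ⟨j, hj⟩).symm
    exact_mod_cast h
  · have h8 : Fintype.card (Fin 8) < j := by rw [Fintype.card_fin]; omega
    rw [card_filter_card_eq_of_card_lt _ h8, card_filter_card_eq_of_card_lt _ h8]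

theorem reliability_phi1 (x : ℝ) :
    ∑ A : Finset (Fin 8), phi1 A * x ^ #A * (1 - x) ^ (8 - #A) =
      x ^ 2 + x ^ 3 - x ^ 6 - x ^ 7 + x ^ 8 := by
  have hsum := sum_mul_card_eq_sum_range phi1 fun j ↦ x ^ j * (1 - x) ^ (8 - j)
  simp only [Fintype.card_fin, ← mul_assoc] at hsum
  rw [hsum, sum_range]
  simp only [sum_card_phi1, card_isPath1, Fin.sum_univ_succ, Fin.sum_univ_zero,
    Matrix.cons_val_succ, Matrix.cons_val_zero, Fin.val_succ, Fin.val_zero]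
  push_cast
  ring

/-- φ₁ and φ₂ are distinct structures with the same diagonal
reliability polynomial x²+x³-x⁶-x⁷+x⁸, hence the same (tail) signature. -/
theorem stmt_19 :
    phi1 ≠ phi2 ∧
    (∀ x : ℝ,
      (∑ A : Finset (Fin 8), phi1 A * x ^ A.card * (1 - x) ^ (8 - A.card)) =
        x ^ 2 + x ^ 3 - x ^ 6 - x ^ 7 + x ^ 8) ∧
    (∀ x : ℝ,
      (∑ A : Finset (Fin 8), phi2 A * x ^ A.card * (1 - x) ^ (8 - A.card)) =
        x ^ 2 + x ^ 3 - x ^ 6 - x ^ 7 + x ^ 8) ∧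
    (∀ k ∈ Finset.range 9, tail8 phi1 k = tail8 phi2 k) ∧
    (∀ k ∈ Finset.Icc 1 8,
      tail8 phi1 (k - 1) - tail8 phi1 k = tail8 phi2 (k - 1) - tail8 phi2 k) := by
  have htail := tail8_eq_of_sum_card_eq sum_card_phi1_eq_phi2
  refine ⟨fun h ↦ ?_, reliability_phi1, fun x ↦ ?_, fun k _ ↦ htail k,
    fun k _ ↦ by rw [htail, htail]⟩
  · have h01 := congrFun h {0, 1}
    rw [phi1_eq_boole, phi2_eq_boole, if_pos (by decide), if_neg (by decide)] at h01
    exact one_ne_zero h01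
  · rw [← reliability_phi1 x]
    exact (reliability_eq_of_sum_card_eq sum_card_phi1_eq_phi2 x).symm
end
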